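/- arXiv:2303.16079 — 4 statements merged into one kernel-verified Lean document; each statement's English description precedes it below -/
import Mathlib

section
/- Let B be a real m × n matrix with full column rank n, let c > 0, b_y > 0 and α < 0, and define f₃(x, y) = (1/2)‖Bᵀx − (α − c·b_y)·𝟙ₙ‖₂² + c·xᵀBy for x ∈ ℝᵐ and y ∈ [−b_y, b_y]ⁿ, where 𝟙ₙ is the all-ones vector. Then the worst-case function is F₃(x) = (1/2)‖Bᵀx − (α − c·b_y)·𝟙ₙ‖₂² + c·b_y·‖Bᵀx‖₁, and x ∈ ℝᵐ is a global minimizer of F₃ if and only if Bᵀx = α·𝟙ₙ. Equivalently, the function h(z) = (1/2)(z − (α − c·b_y))² + c·b_y·|z| on ℝ has the unique minimizer z = α. -/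
/-- For `f₃(x,y) = (1/2)‖Bᵀx − (α − c·b_y)𝟙‖₂² + c·xᵀBy` on
`ℝᵐ × [−b_y,b_y]ⁿ` with `B` of full column rank, `c, b_y > 0` and `α < 0`:
the worst-case function is
`F₃(x) = (1/2)‖Bᵀx − (α − c·b_y)𝟙‖₂² + c·b_y·‖Bᵀx‖₁`, `x` is a global
minimizer of `F₃` iff `Bᵀx = α𝟙`, and the scalar function
`h(z) = (1/2)(z − (α − c·b_y))² + c·b_y·|z|` has unique minimizer `z = α`. -/
theorem f3_worst_case (m n : ℕ) (B : Matrix (Fin m) (Fin n) ℝ)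
    (hB : LinearIndependent ℝ (fun j : Fin n => fun i : Fin m => B i j))
    (c bY α : ℝ) (hc : 0 < c) (hbY : 0 < bY) (hα : α < 0)
    (Y : Set (Fin n → ℝ)) (hY : Y = Set.Icc (fun _ => -bY) (fun _ => bY))
    (f : (Fin m → ℝ) → (Fin n → ℝ) → ℝ)
    (hf : ∀ x y, f x y = 1 / 2 * ∑ j, ((∑ i, B i j * x i) - (α - c * bY)) ^ 2
      + c * ∑ i, ∑ j, x i * B i j * y j)
    (F : (Fin m → ℝ) → ℝ)
    (hF : ∀ x, F x = 1 / 2 * ∑ j, ((∑ i, B i j * x i) - (α - c * bY)) ^ 2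
      + c * bY * ∑ j, |∑ i, B i j * x i|)
    (h : ℝ → ℝ)
    (hh : ∀ z, h z = 1 / 2 * (z - (α - c * bY)) ^ 2 + c * bY * |z|) :
    (∀ x : Fin m → ℝ, IsGreatest ((f x) '' Y) (F x)) ∧
    (∀ x : Fin m → ℝ,
      ((∀ x' : Fin m → ℝ, F x ≤ F x') ↔ (∀ j, (∑ i, B i j * x i) = α))) ∧
    (∀ z : ℝ, z ≠ α → h α < h z) := by
  -- scalar minimization facts
  have hkey : ∀ z : ℝ, h z - h α = 1 / 2 * (z - α) ^ 2 + c * bY * (z + |z|) := by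
    intro z
    have hz := abs_cases z
    have ha : |α| = -α := abs_of_neg hα
    rcases hz with ⟨h1, _⟩ | ⟨h1, _⟩ <;> rw [hh z, hh α, ha, h1] <;> ring
  have hle : ∀ z : ℝ, h α ≤ h z := by
    intro z
    have := hkey z
    have h2 : 0 ≤ z + |z| := by rcases abs_cases z with ⟨h1, _⟩ | ⟨h1, _⟩ <;> linarith
    nlinarith [sq_nonneg (z - α), mul_nonneg (mul_nonneg hc.le hbY.le) h2]
  have hlt : ∀ z : ℝ, z ≠ α → h α < h z := by
    intro z hz
    have := hkey z
    have h2 : 0 ≤ z + |z| := by rcases abs_cases z with ⟨h1, _⟩ | ⟨h1, _⟩ <;> linarith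
    have h3 : 0 < (z - α) ^ 2 := (sq_nonneg _).lt_of_ne (Ne.symm (pow_ne_zero 2 (sub_ne_zero.mpr hz)))
    nlinarith [mul_nonneg (mul_nonneg hc.le hbY.le) h2]
  -- F as a sum of h over coordinates
  have hFh : ∀ x : Fin m → ℝ, F x = ∑ j, h (∑ i, B i j * x i) := by
    intro x
    rw [hF x, Finset.mul_sum, Finset.mul_sum, ← Finset.sum_add_distrib]
    exact Finset.sum_congr rfl fun j _ => (hh _).symm
  -- surjectivity of x ↦ Bᵀx
  have hBt : LinearIndependent ℝ (Matrix.transpose B) := hB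
  have hrank : (Matrix.transpose B).rank = n := by
    rw [LinearIndependent.rank_matrix (M := Matrix.transpose B) hBt, Fintype.card_fin]
  have hsurj : Function.Surjective (Matrix.mulVec (Matrix.transpose B)) := by
    have htop : LinearMap.range (Matrix.transpose B).mulVecLin = ⊤ := by
      apply Submodule.eq_top_of_finrank_eq
      rw [Module.finrank_fintype_fun_eq_card, Fintype.card_fin]
      exact hrank
    intro v
    obtain ⟨x, hx⟩ := LinearMap.range_eq_top.mp htop v
    exact ⟨x, hx⟩
  refine ⟨?_, ?_, hlt⟩
  · -- worst case
    intro x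
    set z : Fin n → ℝ := fun j => ∑ i, B i j * x i with hz
    have hswap : ∀ y : Fin n → ℝ,
        ∑ i, ∑ j, x i * B i j * y j = ∑ j, y j * z j := by
      intro y
      rw [Finset.sum_comm]
      refine Finset.sum_congr rfl fun j _ => ?_
      rw [hz, Finset.mul_sum]
      exact Finset.sum_congr rfl fun i _ => by ring
    constructor
    · -- attained
      refine ⟨fun j => if 0 ≤ z j then bY else -bY, ?_, ?_⟩
      · rw [hY, Set.mem_Icc]
        constructor <;> intro j <;> simp only <;> split <;> simp <;> linarith
      · rw [hf, hF, hswap]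
        congr 1
        rw [Finset.mul_sum, Finset.mul_sum]
        refine Finset.sum_congr rfl fun j _ => ?_
        show _ = c * bY * |z j|
        rcases le_or_gt 0 (z j) with hj | hj
        · rw [if_pos hj, abs_of_nonneg hj]; ring
        · rw [if_neg (not_le.mpr hj), abs_of_neg hj]; ring
    · -- upper bound
      rintro v ⟨y, hy, rfl⟩
      rw [hf, hF, hswap]
      have hb : ∀ j, y j * z j ≤ bY * |z j| := by
        intro j
        rw [hY, Set.mem_Icc] at hy
        have h1 : |y j| ≤ bY := abs_le.mpr ⟨hy.1 j, hy.2 j⟩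
        calc y j * z j ≤ |y j * z j| := le_abs_self _
          _ = |y j| * |z j| := abs_mul _ _
          _ ≤ bY * |z j| := by
              exact mul_le_mul_of_nonneg_right h1 (abs_nonneg _)
      have : ∑ j, y j * z j ≤ ∑ j, bY * |z j| := Finset.sum_le_sum fun j _ => hb j
      rw [mul_assoc, Finset.mul_sum]
      gcongr
      · simpa [Finset.mul_sum] using this
  · -- minimizer characterization
    intro x
    constructor
    · intro hmin
      obtain ⟨x₀, hx₀⟩ := hsurj (fun _ => α)
      have hx₀' : ∀ j, (∑ i, B i j * x₀ i) = α := by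
        intro j
        have := congr_fun hx₀ j
        simpa [Matrix.mulVec, dotProduct, Matrix.transpose_apply, mul_comm] using this
      have hFx₀ : F x₀ = ∑ _j : Fin n, h α := by
        rw [hFh]
        exact Finset.sum_congr rfl fun j _ => by rw [hx₀' j]
      have h1 : F x ≤ F x₀ := hmin x₀
      rw [hFh, hFx₀] at h1
      -- each term of F x is ≥ h α; sum ≤ sum of h α forces equality termwise
      by_contra hcon
      push_neg at hcon
      obtain ⟨j₀, hj₀⟩ := hcon
      have hstrict : ∑ _j : Fin n, h α < ∑ j, h (∑ i, B i j * x i) := by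
        apply Finset.sum_lt_sum (fun j _ => hle _)
        exact ⟨j₀, Finset.mem_univ _, hlt _ hj₀⟩
      linarith
    · intro hx x'
      rw [hFh, hFh]
      apply Finset.sum_le_sum
      intro j _
      rw [hx j]
      exact hle _
end

section
/- Let B be a real m × n matrix with full column rank n and b_y > 0, and define f₄(x, y) = (1/2)‖x‖₂² + xᵀBy + (1/2)‖y‖₂² on X × Y with X = ℝᵐ and Y = [−b_y, b_y]ⁿ. Then x* = 0 is the unique global minimizer of the worst-case function F₄(x) = max_{y∈Y} f₄(x, y), yet for every ỹ ∈ Y the point (0, ỹ) is NOT a local min–max saddle point of f₄. In particular the global min–max solution of f₄ is not a min–max saddle point. -/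
/-- For `f₄(x,y) = (1/2)‖x‖₂² + xᵀBy + (1/2)‖y‖₂²` on `ℝᵐ × [−b_y,b_y]ⁿ` with
`B` of full column rank: `x* = 0` is the unique global minimizer of the
worst-case function `F₄`, yet for every `ỹ ∈ Y` the point `(0, ỹ)` is not a
local min–max saddle point of `f₄`. -/
theorem f4_min_not_saddle (m n : ℕ) (hn : 1 ≤ n) (B : Matrix (Fin m) (Fin n) ℝ)
    (hB : LinearIndependent ℝ (fun j : Fin n => fun i : Fin m => B i j))
    (bY : ℝ) (hbY : 0 < bY)
    (Y : Set (Fin n → ℝ)) (hY : Y = Set.Icc (fun _ => -bY) (fun _ => bY))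
    (f : (Fin m → ℝ) → (Fin n → ℝ) → ℝ)
    (hf : ∀ x y, f x y = 1 / 2 * ∑ i, (x i) ^ 2
      + (∑ i, ∑ j, x i * B i j * y j) + 1 / 2 * ∑ j, (y j) ^ 2)
    (F : (Fin m → ℝ) → ℝ)
    (hF : ∀ x, IsGreatest ((f x) '' Y) (F x)) :
    (∀ x : Fin m → ℝ, x ≠ 0 → F 0 < F x) ∧
    (∀ ytilde ∈ Y,
      ¬ ∃ (Ex : Set (Fin m → ℝ)) (Ey : Set (Fin n → ℝ)), Ey ⊆ Y ∧
        (∃ r > (0 : ℝ), Metric.ball (0 : Fin m → ℝ) r ⊆ Ex) ∧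
        (∃ r > (0 : ℝ), Metric.ball ytilde r ∩ Y ⊆ Ey) ∧
        (∀ x ∈ Ex, ∀ y ∈ Ey, f 0 y ≤ f 0 ytilde ∧ f 0 ytilde ≤ f x ytilde)) := by
  constructor
  · -- Part 1
    intro x hx
    -- F 0 ≤ (1/2) * ∑ bY^2
    have hF0 : F 0 ≤ 1 / 2 * ∑ _j : Fin n, bY ^ 2 := by
      obtain ⟨⟨y0, hy0Y, hy0⟩, _⟩ := hF 0
      rw [← hy0, hf]
      simp only [Pi.zero_apply, zero_mul, Finset.sum_const_zero, mul_zero,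
        zero_pow, ne_eq, OfNat.ofNat_ne_zero, not_false_eq_true]
      have hsq : ∀ j, (y0 j) ^ 2 ≤ bY ^ 2 := by
        intro j
        rw [hY] at hy0Y
        exact sq_le_sq' (hy0Y.1 j) (hy0Y.2 j)
      have hle : ∑ j, (y0 j) ^ 2 ≤ ∑ _j : Fin n, bY ^ 2 :=
        Finset.sum_le_sum (fun j _ => hsq j)
      linarith
    -- choose y with matching signs
    set c : Fin n → ℝ := fun j => ∑ i, x i * B i j with hc
    set y : Fin n → ℝ := fun j => if 0 ≤ c j then bY else -bY with hy
    have hyY : y ∈ Y := by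
      rw [hY]
      constructor <;> intro j <;> simp only [hy] <;> split <;> simp <;> linarith
    have hxsum : 0 < ∑ i, (x i) ^ 2 := by
      obtain ⟨i, hi⟩ := Function.ne_iff.mp hx
      exact Finset.sum_pos' (fun i _ => sq_nonneg _) ⟨i, Finset.mem_univ i, by nlinarith [abs_pos.mpr hi, sq_abs (x i)]⟩
    have hfxy : 1 / 2 * ∑ _j : Fin n, bY ^ 2 < f x y := by
      rw [hf]
      have hmid : (∑ i, ∑ j, x i * B i j * y j) = ∑ j, c j * y j := by
        rw [Finset.sum_comm]
        refine Finset.sum_congr rfl fun j _ => ?_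
        rw [hc, Finset.sum_mul]
      have hmidnn : 0 ≤ ∑ j, c j * y j := by
        refine Finset.sum_nonneg fun j _ => ?_
        simp only [hy]
        split
        · positivity
        · rename_i h
          push_neg at h
          nlinarith
      have hysq : ∀ j, (y j) ^ 2 = bY ^ 2 := by
        intro j; simp only [hy]; split <;> ring
      have : ∑ j, (y j) ^ 2 = ∑ _j : Fin n, bY ^ 2 :=
        Finset.sum_congr rfl fun j _ => hysq j
      rw [hmid, this]
      linarith
    have : f x y ≤ F x := (hF x).2 ⟨y, hyY, rfl⟩
    linarith
  · -- Part 2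
    intro ytilde hytY
    rintro ⟨Ex, Ey, hEyY, ⟨r1, hr1, hEx⟩, ⟨r2, hr2, hEy⟩, hsad⟩
    have h0Ex : (0 : Fin m → ℝ) ∈ Ex := hEx (by simp [Metric.mem_ball, hr1])
    have hytEy : ytilde ∈ Ey := hEy ⟨by simp [Metric.mem_ball, hr2], hytY⟩
    -- Step A: c = 0 where c i = ∑ j, B i j * ytilde j
    set c : Fin m → ℝ := fun i => ∑ j, B i j * ytilde j with hc
    have hkey : ∀ x ∈ Ex, 0 ≤ 1 / 2 * ∑ i, (x i) ^ 2 + ∑ i, x i * c i := by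
      intro x hxEx
      have := (hsad x hxEx ytilde hytEy).2
      rw [hf, hf] at this
      simp only [Pi.zero_apply, zero_mul, Finset.sum_const_zero, mul_zero,
        zero_pow, ne_eq, OfNat.ofNat_ne_zero, not_false_eq_true] at this
      have hmid : (∑ i, ∑ j, x i * B i j * ytilde j) = ∑ i, x i * c i := by
        refine Finset.sum_congr rfl fun i _ => ?_
        rw [hc, Finset.mul_sum]
        exact Finset.sum_congr rfl fun j _ => by ring
      rw [hmid] at this
      linarith
    have hS : ∑ i, (c i) ^ 2 = 0 := by
      by_contra hS0
      have hSpos : 0 < ∑ i, (c i) ^ 2 :=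
        lt_of_le_of_ne (Finset.sum_nonneg fun i _ => sq_nonneg _) (Ne.symm hS0)
      set t : ℝ := min 1 (r1 / (‖c‖ + 1)) with ht
      have hnc : (0:ℝ) < ‖c‖ + 1 := by positivity
      have htpos : 0 < t := lt_min one_pos (by positivity)
      have ht1 : t ≤ 1 := min_le_left _ _
      have hxball : (fun i => -t * c i) ∈ Metric.ball (0 : Fin m → ℝ) r1 := by
        rw [Metric.mem_ball]
        have heq : (fun i => -t * c i) = (-t) • c := by
          funext i; simp [smul_eq_mul]
        rw [heq, dist_zero_right, norm_smul]
        simp only [norm_neg, Real.norm_eq_abs, abs_of_pos htpos]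
        have h1 : t ≤ r1 / (‖c‖ + 1) := min_le_right _ _
        have h2 : ‖c‖ < ‖c‖ + 1 := by linarith
        calc t * ‖c‖ ≤ (r1 / (‖c‖ + 1)) * ‖c‖ :=
              mul_le_mul_of_nonneg_right h1 (norm_nonneg _)
          _ < r1 := by
              rw [div_mul_eq_mul_div, div_lt_iff₀ hnc]
              nlinarith [norm_nonneg c]
      have := hkey _ (hEx hxball)
      have h1 : ∑ i, (-t * c i) ^ 2 = t ^ 2 * ∑ i, (c i) ^ 2 := by
        rw [Finset.mul_sum]; exact Finset.sum_congr rfl fun i _ => by ring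
      have h2 : ∑ i, (-t * c i) * c i = -t * ∑ i, (c i) ^ 2 := by
        rw [Finset.mul_sum]; exact Finset.sum_congr rfl fun i _ => by ring
      rw [h1, h2] at this
      nlinarith [mul_pos htpos hSpos,
        mul_le_mul_of_nonneg_right ht1 (mul_pos htpos hSpos).le]
    have hczero : ∀ i, c i = 0 := by
      intro i
      have := (Finset.sum_eq_zero_iff_of_nonneg (fun i _ => sq_nonneg (c i))).mp hS i
        (Finset.mem_univ i)
      exact pow_eq_zero_iff (by norm_num) |>.mp this
    -- Step B: ytilde = 0
    have hyt0 : ytilde = 0 := by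
      have := Fintype.linearIndependent_iff.mp hB ytilde ?_
      · funext j; exact this j
      · funext i
        simp only [Finset.sum_apply, Pi.smul_apply, smul_eq_mul, Pi.zero_apply]
        rw [← hczero i, hc]
        exact Finset.sum_congr rfl fun j _ => by ring
    -- Step C: contradiction from a nonzero y near 0 in Ey
    set ε : ℝ := min (r2 / 2) bY with hε
    have hεpos : 0 < ε := lt_min (by linarith) hbY
    have hεle : ε ≤ bY := min_le_right _ _
    set y : Fin n → ℝ := fun _ => ε with hy
    have hyball : y ∈ Metric.ball ytilde r2 := by
      rw [hyt0, Metric.mem_ball]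
      rw [dist_pi_lt_iff hr2]
      intro j
      simp only [hy, Pi.zero_apply, Real.dist_eq, sub_zero, abs_of_pos hεpos]
      have : ε ≤ r2 / 2 := min_le_left _ _
      linarith
    have hyY2 : y ∈ Y := by
      rw [hY]; exact ⟨fun j => by dsimp [hy]; linarith, fun j => by dsimp [hy]; linarith⟩
    have hyEy : y ∈ Ey := hEy ⟨hyball, hyY2⟩
    have := (hsad 0 h0Ex y hyEy).1
    rw [hf, hf, hyt0] at this
    simp only [Pi.zero_apply, zero_mul, Finset.sum_const_zero, mul_zero,
      zero_pow, ne_eq, OfNat.ofNat_ne_zero, not_false_eq_true] at this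
    have hsum : ∑ _j : Fin n, ε ^ 2 = n * ε ^ 2 := by
      rw [Finset.sum_const, Finset.card_univ, Fintype.card_fin, nsmul_eq_mul]
    simp only [hy] at this
    rw [hsum] at this
    have hn' : (1:ℝ) ≤ n := by exact_mod_cast hn
    nlinarith
end

section
/- Let z ∈ ℝ and b_y > 0, and define g(y) = (z + e^{sign(y)}·sin(πy/b_y))² for y ∈ [−b_y, b_y], where sign(0) = 0. Then: (i) g(y) ≤ max((z + e)², (z − e^{−1})²) for all y ∈ [−b_y, b_y]; (ii) g(b_y/2) = (z + e)² and g(−b_y/2) = (z − e^{−1})²; and (iii) if z ≥ −sinh(1) the maximum of g over [−b_y, b_y] equals (z + e)² and is attained at y = b_y/2, while if z ≤ −sinh(1) the maximum equals (z − e^{−1})² and is attained at y = −b_y/2 (both hold with equality of the two values exactly when z = −sinh(1)). -/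
private lemma key_bound (z t : ℝ) (h1 : -Real.exp (-1) ≤ t) (h2 : t ≤ Real.exp 1) :
    (z + t) ^ 2 ≤ max ((z + Real.exp 1) ^ 2) ((z - Real.exp (-1)) ^ 2) := by
  have hlt : Real.exp (-1) < Real.exp 1 := Real.exp_lt_exp.mpr (by norm_num)
  rcases le_or_gt 0 (2 * z + Real.exp 1 + t) with h | h
  · exact le_max_of_le_left (by nlinarith)
  · exact le_max_of_le_right (by nlinarith [Real.exp_pos (-1), Real.exp_pos 1, hlt])

/-- For `g(y) = (z + e^{sign(y)}·sin(πy/b_y))²` on `[−b_y, b_y]`: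
(i) `g(y) ≤ max((z+e)², (z−e⁻¹)²)`; (ii) `g(b_y/2) = (z+e)²` and
`g(−b_y/2) = (z−e⁻¹)²`; (iii) if `z ≥ −sinh(1)` the maximum is `(z+e)²`,
attained at `b_y/2`, if `z ≤ −sinh(1)` the maximum is `(z−e⁻¹)²`, attained
at `−b_y/2`, and the two values coincide exactly when `z = −sinh(1)`. -/
theorem f9_inner_max (z bY : ℝ) (hbY : 0 < bY)
    (g : ℝ → ℝ)
    (hg : ∀ y, g y = (z + Real.exp (Real.sign y) * Real.sin (Real.pi * y / bY)) ^ 2) :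
    (∀ y ∈ Set.Icc (-bY) bY,
      g y ≤ max ((z + Real.exp 1) ^ 2) ((z - Real.exp (-1)) ^ 2)) ∧
    (g (bY / 2) = (z + Real.exp 1) ^ 2 ∧ g (-(bY / 2)) = (z - Real.exp (-1)) ^ 2) ∧
    (z ≥ -Real.sinh 1 →
      IsGreatest (g '' Set.Icc (-bY) bY) ((z + Real.exp 1) ^ 2) ∧
      g (bY / 2) = (z + Real.exp 1) ^ 2) ∧
    (z ≤ -Real.sinh 1 →
      IsGreatest (g '' Set.Icc (-bY) bY) ((z - Real.exp (-1)) ^ 2) ∧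
      g (-(bY / 2)) = (z - Real.exp (-1)) ^ 2) ∧
    ((z + Real.exp 1) ^ 2 = (z - Real.exp (-1)) ^ 2 ↔ z = -Real.sinh 1) := by
  have hbY' : bY ≠ 0 := ne_of_gt hbY
  have hpi := Real.pi_pos
  -- part (i)
  have part1 : ∀ y ∈ Set.Icc (-bY) bY,
      g y ≤ max ((z + Real.exp 1) ^ 2) ((z - Real.exp (-1)) ^ 2) := by
    intro y hy
    obtain ⟨hy1, hy2⟩ := hy
    rw [hg y]
    rcases lt_trichotomy y 0 with hneg | hzero | hpos
    · rw [Real.sign_of_neg hneg]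
      set s := Real.sin (Real.pi * y / bY) with hs
      have hsle : s ≤ 0 := by
        apply Real.sin_nonpos_of_nonpos_of_neg_pi_le
        · apply div_nonpos_of_nonpos_of_nonneg
          · exact mul_nonpos_of_nonneg_of_nonpos (le_of_lt hpi) (le_of_lt hneg)
          · exact le_of_lt hbY
        · rw [neg_le, ← neg_div, div_le_iff₀ hbY]
          nlinarith
      have hsge : -1 ≤ s := Real.neg_one_le_sin _
      apply key_bound
      · nlinarith [Real.exp_pos (-1)]
      · have hlt : Real.exp (-1) < Real.exp 1 := Real.exp_lt_exp.mpr (by norm_num)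
        nlinarith [Real.exp_pos (-1), hlt]
    · subst hzero
      simp only [Real.sign_zero, mul_zero, zero_div, Real.sin_zero, Real.exp_zero, one_mul,
        mul_zero, add_zero]
      have := key_bound z 0 (by linarith [Real.exp_pos (-1)]) (by linarith [Real.exp_pos 1])
      simpa using this
    · rw [Real.sign_of_pos hpos]
      set s := Real.sin (Real.pi * y / bY) with hs
      have hsge : 0 ≤ s := by
        apply Real.sin_nonneg_of_nonneg_of_le_pi
        · positivity
        · rw [div_le_iff₀ hbY]; nlinarith
      have hsle : s ≤ 1 := Real.sin_le_one _
      apply key_bound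
      · nlinarith [Real.exp_pos (-1), Real.exp_pos 1]
      · nlinarith [Real.exp_pos 1]
  -- part (ii)
  have e1 : g (bY / 2) = (z + Real.exp 1) ^ 2 := by
    rw [hg]
    have h2 : (0:ℝ) < bY / 2 := by linarith
    rw [Real.sign_of_pos h2]
    have : Real.pi * (bY / 2) / bY = Real.pi / 2 := by field_simp
    rw [this, Real.sin_pi_div_two, mul_one]
  have e2 : g (-(bY / 2)) = (z - Real.exp (-1)) ^ 2 := by
    rw [hg]
    have h2 : (-(bY / 2) : ℝ) < 0 := by linarith
    rw [Real.sign_of_neg h2]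
    have : Real.pi * -(bY / 2) / bY = -(Real.pi / 2) := by field_simp
    rw [this, Real.sin_neg, Real.sin_pi_div_two]
    ring_nf
  have hsinh : Real.sinh 1 = (Real.exp 1 - Real.exp (-1)) / 2 := by
    rw [Real.sinh_eq]
  have emem : bY / 2 ∈ Set.Icc (-bY) bY := by
    constructor <;> [linarith; linarith]
  have emem' : -(bY / 2) ∈ Set.Icc (-bY) bY := by
    constructor <;> [linarith; linarith]
  refine ⟨part1, ⟨e1, e2⟩, ?_, ?_, ?_⟩
  · intro hz
    refine ⟨⟨⟨bY / 2, emem, e1⟩, ?_⟩, e1⟩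
    rintro v ⟨y, hy, rfl⟩
    have := part1 y hy
    have hmax : max ((z + Real.exp 1) ^ 2) ((z - Real.exp (-1)) ^ 2)
        = (z + Real.exp 1) ^ 2 := by
      apply max_eq_left
      nlinarith [Real.exp_pos (-1), Real.exp_pos 1]
    linarith [hmax ▸ this]
  · intro hz
    refine ⟨⟨⟨-(bY / 2), emem', e2⟩, ?_⟩, e2⟩
    rintro v ⟨y, hy, rfl⟩
    have := part1 y hy
    have hmax : max ((z + Real.exp 1) ^ 2) ((z - Real.exp (-1)) ^ 2)
        = (z - Real.exp (-1)) ^ 2 := by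
      apply max_eq_right
      nlinarith [Real.exp_pos (-1), Real.exp_pos 1]
    linarith [hmax ▸ this]
  · constructor
    · intro h
      nlinarith [Real.exp_pos (-1), Real.exp_pos 1]
    · intro h
      nlinarith [Real.exp_pos (-1), Real.exp_pos 1]
end

section
/- Let n ≥ 1 and b_y > 0, and define f₁₀(x, y) = ‖x‖₂² − 2‖y − x‖₂² for x, y ∈ ℝⁿ with y restricted to Y = [−b_y, b_y]ⁿ. Then: (i) for every x ∈ ℝⁿ the unique maximizer of y ↦ f₁₀(x, y) over Y is the componentwise clipping of x to [−b_y, b_y], and the worst-case function is F₁₀(x) = ‖x‖₂² − 2·Σᵢ (max(|xᵢ| − b_y, 0))²; (ii) restricting x to X = [−b_y, b_y]ⁿ, F₁₀(x) = ‖x‖₂² on X and x* = 0 is its unique global minimizer; and (iii) for every ỹ ∈ Y, the point (0, ỹ) is NOT a local min–max saddle point of f₁₀ on X × Y. -/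
private lemma clip_sq (b s : ℝ) (hb : 0 < b) :
    (min (max s (-b)) b - s) ^ 2 = (max (|s| - b) 0) ^ 2 := by
  rcases le_total s (-b) with h | h
  · rw [max_eq_right h, min_eq_left (by linarith), abs_of_nonpos (by linarith),
      max_eq_left (by linarith)]
    ring
  · rcases le_total b s with h2 | h2
    · rw [max_eq_left (by linarith), min_eq_right h2, abs_of_nonneg (by linarith),
        max_eq_left (by linarith)]
      ring
    · rw [max_eq_left h, min_eq_left h2, max_eq_right]
      · ring
      · have := abs_le.mpr ⟨h, h2⟩
        linarith

private lemma clip_le (b s t : ℝ) (hb : 0 < b) (h1 : -b ≤ t) (h2 : t ≤ b) :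
    (max (|s| - b) 0) ^ 2 ≤ (t - s) ^ 2 := by
  rcases le_total s (-b) with h | h
  · rw [abs_of_nonpos (by linarith), max_eq_left (by linarith)]
    nlinarith
  · rcases le_total b s with h3 | h3
    · rw [abs_of_nonneg (by linarith), max_eq_left (by linarith)]
      nlinarith
    · rw [max_eq_right]
      · simpa using sq_nonneg (t - s)
      · have := abs_le.mpr ⟨h, h3⟩
        linarith

private lemma clip_lt (b s t : ℝ) (hb : 0 < b) (h1 : -b ≤ t) (h2 : t ≤ b)
    (hne : t ≠ min (max s (-b)) b) :
    (max (|s| - b) 0) ^ 2 < (t - s) ^ 2 := by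
  rcases le_total s (-b) with h | h
  · rw [max_eq_right h, min_eq_left (by linarith)] at hne
    rw [abs_of_nonpos (by linarith), max_eq_left (by linarith)]
    have : -b < t := lt_of_le_of_ne h1 (Ne.symm hne)
    nlinarith
  · rcases le_total b s with h3 | h3
    · rw [max_eq_left (by linarith), min_eq_right h3] at hne
      rw [abs_of_nonneg (by linarith), max_eq_left (by linarith)]
      have : t < b := lt_of_le_of_ne h2 hne
      nlinarith
    · rw [max_eq_left h, min_eq_left h3] at hne
      rw [max_eq_right]
      · have h4 : t - s ≠ 0 := sub_ne_zero.mpr hne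
        have := sq_pos_of_ne_zero h4
        simpa [sq] using this
      · have := abs_le.mpr ⟨h, h3⟩
        linarith

/-- For `f₁₀(x,y) = ‖x‖₂² − 2‖y − x‖₂²` with `y ∈ Y = [−b_y,b_y]ⁿ`:
(i) the unique maximizer in `y` is the componentwise clipping of `x` to the
box, and `F₁₀(x) = ‖x‖₂² − 2·Σᵢ max(|xᵢ| − b_y, 0)²`; (ii) for `x ∈ X = Y`,
`F₁₀(x) = ‖x‖₂²` and `x* = 0` is the unique global minimizer of `F₁₀` on `X`;
(iii) for every `ỹ ∈ Y`, `(0, ỹ)` is not a local min–max saddle point of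
`f₁₀` on `X × Y`. -/
theorem f10_minmax (n : ℕ) (hn : 1 ≤ n) (bY : ℝ) (hbY : 0 < bY)
    (Y : Set (Fin n → ℝ)) (hY : Y = Set.Icc (fun _ => -bY) (fun _ => bY))
    (X : Set (Fin n → ℝ)) (hX : X = Set.Icc (fun _ => -bY) (fun _ => bY))
    (f : (Fin n → ℝ) → (Fin n → ℝ) → ℝ)
    (hf : ∀ x y, f x y = (∑ i, (x i) ^ 2) - 2 * ∑ i, (y i - x i) ^ 2)
    (F : (Fin n → ℝ) → ℝ)
    (hF : ∀ x, F x = (∑ i, (x i) ^ 2) - 2 * ∑ i, (max (|x i| - bY) 0) ^ 2) :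
    (∀ x : Fin n → ℝ,
      (fun i => min (max (x i) (-bY)) bY) ∈ Y ∧
      (∀ y ∈ Y, y ≠ (fun i => min (max (x i) (-bY)) bY) →
        f x y < f x (fun i => min (max (x i) (-bY)) bY)) ∧
      IsGreatest ((f x) '' Y) (F x)) ∧
    (∀ x ∈ X, F x = ∑ i, (x i) ^ 2) ∧
    (∀ x ∈ X, x ≠ 0 → F 0 < F x) ∧
    (∀ ytilde ∈ Y,
      ¬ ∃ (Ex : Set (Fin n → ℝ)) (Ey : Set (Fin n → ℝ)), Ex ⊆ X ∧ Ey ⊆ Y ∧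
        (∃ r > (0 : ℝ), Metric.ball (0 : Fin n → ℝ) r ∩ X ⊆ Ex) ∧
        (∃ r > (0 : ℝ), Metric.ball ytilde r ∩ Y ⊆ Ey) ∧
        (∀ x ∈ Ex, ∀ y ∈ Ey, f 0 y ≤ f 0 ytilde ∧ f 0 ytilde ≤ f x ytilde)) := by
  subst hY hX
  have memY : ∀ y : Fin n → ℝ,
      y ∈ Set.Icc (fun _ : Fin n => -bY) (fun _ => bY) ↔ ∀ i, -bY ≤ y i ∧ y i ≤ bY := by
    intro y
    simp [Set.mem_Icc, Pi.le_def, forall_and]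
  have clip_sum : ∀ x : Fin n → ℝ,
      ∑ i, ((fun i => min (max (x i) (-bY)) bY) i - x i) ^ 2
        = ∑ i, (max (|x i| - bY) 0) ^ 2 :=
    fun x => Finset.sum_congr rfl fun i _ => clip_sq bY (x i) hbY
  refine ⟨fun x => ⟨?_, ?_, ?_, ?_⟩, ?_, ?_, ?_⟩
  · rw [memY]
    intro i
    exact ⟨le_min (le_max_right _ _) (by linarith), min_le_right _ _⟩
  · -- strict maximality
    intro y hy hne
    rw [memY] at hy
    rw [hf, hf, clip_sum]
    have hlt : ∑ i, (max (|x i| - bY) 0) ^ 2 < ∑ i, (y i - x i) ^ 2 := by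
      obtain ⟨j, hj⟩ := Function.ne_iff.mp hne
      refine Finset.sum_lt_sum (fun i _ => clip_le bY (x i) (y i) hbY (hy i).1 (hy i).2)
        ⟨j, Finset.mem_univ j, clip_lt bY (x j) (y j) hbY (hy j).1 (hy j).2 hj⟩
    linarith
  · -- F x ∈ f x '' Y
    refine ⟨(fun i => min (max (x i) (-bY)) bY), ?_, ?_⟩
    · rw [memY]
      intro i
      exact ⟨le_min (le_max_right _ _) (by linarith), min_le_right _ _⟩
    · rw [hf, hF, clip_sum]
  · -- upper bound
    rintro v ⟨y, hy, rfl⟩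
    rw [memY] at hy
    rw [hf, hF]
    have : ∑ i, (max (|x i| - bY) 0) ^ 2 ≤ ∑ i, (y i - x i) ^ 2 :=
      Finset.sum_le_sum fun i _ => clip_le bY (x i) (y i) hbY (hy i).1 (hy i).2
    linarith
  · -- F on X
    intro x hx
    rw [memY] at hx
    rw [hF]
    have : ∑ i, (max (|x i| - bY) 0) ^ 2 = 0 := by
      refine Finset.sum_eq_zero fun i _ => ?_
      have := abs_le.mpr ⟨(hx i).1, (hx i).2⟩
      rw [max_eq_right (by linarith)]
      simp
    rw [this]
    ring
  · -- unique minimizer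
    intro x hx hne
    rw [memY] at hx
    rw [hF, hF]
    have h0 : ∑ i, ((0 : Fin n → ℝ) i) ^ 2 = 0 := by simp
    have h0' : ∑ i, (max (|(0 : Fin n → ℝ) i| - bY) 0) ^ 2 = 0 := by
      have hm : max (-bY) 0 = 0 := max_eq_right (by linarith)
      simp [hm]
    have hm : ∑ i, (max (|x i| - bY) 0) ^ 2 = 0 := by
      refine Finset.sum_eq_zero fun i _ => ?_
      have := abs_le.mpr ⟨(hx i).1, (hx i).2⟩
      rw [max_eq_right (by linarith)]
      simp
    have hpos : 0 < ∑ i, (x i) ^ 2 := by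
      obtain ⟨j, hj⟩ := Function.ne_iff.mp hne
      refine Finset.sum_pos' (fun i _ => sq_nonneg _) ⟨j, Finset.mem_univ j, ?_⟩
      have : x j ≠ 0 := hj
      positivity
    rw [h0, h0', hm]
    linarith
  · -- not a local min–max saddle point
    rintro ytilde hyt ⟨Ex, Ey, hExX, hEyY, ⟨r, hr, hballx⟩, ⟨r', hr', hbally⟩, hsad⟩
    rw [memY] at hyt
    set t : ℝ := min bY (r / 2) with ht
    have htpos : 0 < t := lt_min hbY (by linarith)
    have htb : t ≤ bY := min_le_left _ _
    have htr : t < r := lt_of_le_of_lt (min_le_right _ _) (by linarith)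
    set x : Fin n → ℝ := fun i => if 0 ≤ ytilde i then -t else t with hxdef
    have hxX : x ∈ Set.Icc (fun _ : Fin n => -bY) (fun _ => bY) := by
      rw [memY]
      intro i
      simp only [hxdef]
      split <;> constructor <;> linarith
    have hxEx : x ∈ Ex := by
      apply hballx
      refine ⟨Metric.mem_ball.mpr ?_, hxX⟩
      rw [dist_pi_lt_iff hr]
      intro i
      simp only [hxdef, Pi.zero_apply, Real.dist_eq]
      split <;> simp <;> [skip; rw [abs_of_pos htpos]] <;> first | rwa [abs_of_pos htpos] | linarith
    have hyEy : ytilde ∈ Ey := by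
      apply hbally
      refine ⟨Metric.mem_ball_self hr', ?_⟩
      rw [memY]
      exact hyt
    have hineq := (hsad x hxEx ytilde hyEy).2
    rw [hf, hf] at hineq
    simp only [Pi.zero_apply, sub_zero, zero_pow, Finset.sum_const_zero, ne_eq,
      OfNat.ofNat_ne_zero, not_false_eq_true] at hineq
    have e1 : ∑ i, (ytilde i - x i) ^ 2
        = (∑ i, (ytilde i) ^ 2) - 2 * (∑ i, ytilde i * x i) + ∑ i, (x i) ^ 2 := by
      rw [Finset.mul_sum, ← Finset.sum_sub_distrib, ← Finset.sum_add_distrib]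
      exact Finset.sum_congr rfl fun i _ => by ring
    have e2 : ∑ i, (x i) ^ 2 = (n : ℝ) * t ^ 2 := by
      have : ∀ i : Fin n, (x i) ^ 2 = t ^ 2 := by
        intro i
        simp only [hxdef]
        split <;> ring
      rw [Finset.sum_congr rfl fun i _ => this i]
      simp [Finset.card_univ]
    have e3 : ∑ i, ytilde i * x i ≤ 0 := by
      refine Finset.sum_nonpos fun i _ => ?_
      simp only [hxdef]
      split
      · rename_i h
        nlinarith
      · rename_i h
        push_neg at h
        nlinarith
    have hn1 : (1 : ℝ) ≤ (n : ℝ) := by exact_mod_cast hn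
    nlinarith [sq_nonneg t]
end
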